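/- Let M̂ and M̃ be symmetric positive definite real N×N matrices with M̂ entrywise non-negative, and suppose |[M̃]_{i,j} − [M̂]_{i,j}| ≤ σ [M̂]_{i,j} for all i,j and some σ ≥ 0. Then for every nonzero vector w, 1 − σ κ(M̂) ≤ (wᵀ M̃ w)/(wᵀ M̂ w) ≤ 1 + σ κ(M̂), where κ(M̂) = λ_max(M̂)/λ_min(M̂). -/

import Mathlib

/-!
Since `|M̃ᵢⱼ - M̂ᵢⱼ| ≤ σ M̂ᵢⱼ`, the triangle inequality gives
`|wᵀ M̃ w - wᵀ M̂ w| ≤ σ |w|ᵀ M̂ |w| ≤ σ λ_max ‖w‖²`, and `λ_min ‖w‖² ≤ wᵀ M̂ w`;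
dividing by `wᵀ M̂ w > 0` bounds the quotient within `σ κ(M̂)` of `1`.
-/

open Matrix

namespace Matrix

variable {n : Type*} [Fintype n]

theorem abs_dotProduct_mulVec_le_of_abs_le {E B : Matrix n n ℝ} (h : ∀ i j, |E i j| ≤ B i j)
    (v w : n → ℝ) : |v ⬝ᵥ E *ᵥ w| ≤ |v| ⬝ᵥ B *ᵥ |w| := by
  simp only [dotProduct, mulVec, Finset.mul_sum, Pi.abs_apply]
  refine (Finset.abs_sum_le_sum_abs _ _).trans (Finset.sum_le_sum fun i _ => ?_)
  refine (Finset.abs_sum_le_sum_abs _ _).trans (Finset.sum_le_sum fun j _ => ?_)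
  rw [abs_mul, abs_mul]
  gcongr
  exact h i j

variable [DecidableEq n] {A : Matrix n n ℝ}

open scoped MatrixOrder in
theorem IsHermitian.dotProduct_mulVec_le_of_spectrum_le (hA : A.IsHermitian) {r : ℝ}
    (hr : ∀ x ∈ spectrum ℝ A, x ≤ r) (v : n → ℝ) : v ⬝ᵥ A *ᵥ v ≤ r * (v ⬝ᵥ v) := by
  have := (le_iff.mp (le_algebraMap_of_spectrum_le hr hA.isSelfAdjoint)).dotProduct_mulVec_nonneg v
  simpa [sub_mulVec, dotProduct_sub, Algebra.algebraMap_eq_smul_one, smul_mulVec, dotProduct_smul]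
    using this

open scoped MatrixOrder in
theorem IsHermitian.le_dotProduct_mulVec_of_le_spectrum (hA : A.IsHermitian) {r : ℝ}
    (hr : ∀ x ∈ spectrum ℝ A, r ≤ x) (v : n → ℝ) : r * (v ⬝ᵥ v) ≤ v ⬝ᵥ A *ᵥ v := by
  have := (le_iff.mp (algebraMap_le_of_le_spectrum hr hA.isSelfAdjoint)).dotProduct_mulVec_nonneg v
  simpa [sub_mulVec, dotProduct_sub, Algebra.algebraMap_eq_smul_one, smul_mulVec, dotProduct_smul]
    using this

theorem IsHermitian.dotProduct_mulVec_le_sSup_spectrum (hA : A.IsHermitian) (v : n → ℝ) :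
    v ⬝ᵥ A *ᵥ v ≤ sSup (spectrum ℝ A) * (v ⬝ᵥ v) :=
  hA.dotProduct_mulVec_le_of_spectrum_le (fun _ hx => le_csSup A.finite_real_spectrum.bddAbove hx) v

theorem IsHermitian.sInf_spectrum_mul_le_dotProduct_mulVec (hA : A.IsHermitian) (v : n → ℝ) :
    sInf (spectrum ℝ A) * (v ⬝ᵥ v) ≤ v ⬝ᵥ A *ᵥ v :=
  hA.le_dotProduct_mulVec_of_le_spectrum (fun _ hx => csInf_le A.finite_real_spectrum.bddBelow hx) v

theorem PosDef.pos_of_mem_spectrum (hA : A.PosDef) {x : ℝ} (hx : x ∈ spectrum ℝ A) : 0 < x := by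
  rw [hA.1.spectrum_real_eq_range_eigenvalues] at hx
  obtain ⟨i, rfl⟩ := hx
  exact hA.eigenvalues_pos i

theorem PosDef.sInf_spectrum_pos [Nonempty n] (hA : A.PosDef) : 0 < sInf (spectrum ℝ A) :=
  hA.pos_of_mem_spectrum <| Set.Nonempty.csInf_mem
    ⟨_, hA.1.eigenvalues_mem_spectrum_real (Classical.arbitrary n)⟩ A.finite_real_spectrum

end Matrix

theorem rayleigh_perturbation_general {N : ℕ}
    (Mh Mt : Matrix (Fin N) (Fin N) ℝ) (hMh : Mh.PosDef)
    (σ : ℝ) (hσ : 0 ≤ σ)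
    (hpert : ∀ i j, |Mt i j - Mh i j| ≤ σ * Mh i j) :
    ∀ w : Fin N → ℝ, w ≠ 0 →
      1 - σ * (sSup (spectrum ℝ Mh) / sInf (spectrum ℝ Mh)) ≤
          (w ⬝ᵥ Mt.mulVec w) / (w ⬝ᵥ Mh.mulVec w) ∧
      (w ⬝ᵥ Mt.mulVec w) / (w ⬝ᵥ Mh.mulVec w) ≤
          1 + σ * (sSup (spectrum ℝ Mh) / sInf (spectrum ℝ Mh)) := by
  intro w hw
  have : Nonempty (Fin N) := (Function.ne_iff.mp hw).nonempty
  set lmin := sInf (spectrum ℝ Mh)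
  set lmax := sSup (spectrum ℝ Mh)
  have hlmin : 0 < lmin := hMh.sInf_spectrum_pos
  have hH : 0 < w ⬝ᵥ Mh *ᵥ w := by simpa using hMh.dotProduct_mulVec_pos hw
  have hdiff : |w ⬝ᵥ Mt *ᵥ w - w ⬝ᵥ Mh *ᵥ w| ≤ σ * (lmax / lmin) * (w ⬝ᵥ Mh *ᵥ w) :=
    calc |w ⬝ᵥ Mt *ᵥ w - w ⬝ᵥ Mh *ᵥ w|
        = |w ⬝ᵥ (Mt - Mh) *ᵥ w| := by rw [sub_mulVec, dotProduct_sub]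
      _ ≤ |w| ⬝ᵥ (σ • Mh) *ᵥ |w| := abs_dotProduct_mulVec_le_of_abs_le (by simpa using hpert) w w
      _ = σ * (|w| ⬝ᵥ Mh *ᵥ |w|) := by rw [smul_mulVec, dotProduct_smul, smul_eq_mul]
      _ ≤ σ * (lmax * (w ⬝ᵥ w)) := by
          gcongr
          simpa [dotProduct, abs_mul_abs_self] using hMh.1.dotProduct_mulVec_le_sSup_spectrum |w|
      _ = σ * (lmax / lmin) * (lmin * (w ⬝ᵥ w)) := by field_simp
      _ ≤ σ * (lmax / lmin) * (w ⬝ᵥ Mh *ᵥ w) := by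
          have : 0 ≤ lmax := Real.sSup_nonneg fun _ hx => (hMh.pos_of_mem_spectrum hx).le
          gcongr
          exact hMh.1.sInf_spectrum_mul_le_dotProduct_mulVec w
  rw [le_div_iff₀ hH, div_le_iff₀ hH]
  constructor <;> linarith [abs_le.mp hdiff]

/-- Entrywise perturbation bound for generalized Rayleigh quotients: if
`|[M̃]_{ij} − [M̂]_{ij}| ≤ σ [M̂]_{ij}` with `M̂` SPD entrywise non-negative, then for every
nonzero `w`, `1 − σ κ(M̂) ≤ (wᵀ M̃ w)/(wᵀ M̂ w) ≤ 1 + σ κ(M̂)`. -/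
theorem rayleigh_perturbation {N : ℕ}
    (Mh Mt : Matrix (Fin N) (Fin N) ℝ) (hMh : Mh.PosDef) (hMt : Mt.PosDef)
    (hnn : ∀ i j, 0 ≤ Mh i j) (σ : ℝ) (hσ : 0 ≤ σ)
    (hpert : ∀ i j, |Mt i j - Mh i j| ≤ σ * Mh i j) :
    ∀ w : Fin N → ℝ, w ≠ 0 →
      1 - σ * (sSup (spectrum ℝ Mh) / sInf (spectrum ℝ Mh)) ≤
          (w ⬝ᵥ Mt.mulVec w) / (w ⬝ᵥ Mh.mulVec w) ∧
      (w ⬝ᵥ Mt.mulVec w) / (w ⬝ᵥ Mh.mulVec w) ≤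
          1 + σ * (sSup (spectrum ℝ Mh) / sInf (spectrum ℝ Mh)) :=
  rayleigh_perturbation_general Mh Mt hMh σ hσ hpert
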